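/- The set of points (r_a, r_b, r_c, r_d) in ℝ^4 satisfying the nine inequalities r_a ≥ 0, r_b ≥ 0, r_c ≥ 0, r_d ≥ 0, r_a ≤ 1, r_d ≤ 1, r_b + r_c ≤ 2, r_a + r_b ≤ 2, and r_c + r_d ≤ 2 is equal to the convex hull in ℝ^4 of the 15 points (0,2,0,1), (0,2,0,0), (1,1,1,0), (1,1,0,0), (1,1,0,1), (1,0,0,1), (0,0,0,1), (0,0,0,0), (1,0,0,0), (1,0,1,1), (0,0,1,1), (0,1,1,1), (1,0,2,0), (0,0,2,0), (1,1,1,1). -/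

import Mathlib

/-!
The polytope is an intersection of half-spaces, hence convex, and it contains the fifteen points.
Conversely, the unit cube lies in the hull: each of its corners is one of the points or the
midpoint of two of them. Above the cube the polytope is a pyramid: where `1 < r 1` it is the
union of the segments joining the edge `{(0, 2, 0, d)}` to the cube face `r 1 = 1`, and
symmetrically where `1 < r 2`.
-/

open Matrix Set

def vamosRegion : Set (Fin 4 → ℝ) :=
  {r | 0 ≤ r 0 ∧ 0 ≤ r 1 ∧ 0 ≤ r 2 ∧ 0 ≤ r 3 ∧
    r 0 ≤ 1 ∧ r 3 ≤ 1 ∧ r 1 + r 2 ≤ 2 ∧ r 0 + r 1 ≤ 2 ∧ r 2 + r 3 ≤ 2}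

def vamosVertices : Set (Fin 4 → ℝ) :=
  {![0,2,0,1], ![0,2,0,0], ![1,1,1,0], ![1,1,0,0],
    ![1,1,0,1], ![1,0,0,1], ![0,0,0,1], ![0,0,0,0],
    ![1,0,0,0], ![1,0,1,1], ![0,0,1,1], ![0,1,1,1],
    ![1,0,2,0], ![0,0,2,0], ![1,1,1,1]}

theorem pi_Icc_subset_of_forall_corner_mem {ι : Type*} [Finite ι] {C : Set (ι → ℝ)}
    (hC : Convex ℝ C) (h : ∀ x : ι → ℝ, (∀ i, x i = 0 ∨ x i = 1) → x ∈ C) :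
    univ.pi (fun _ ↦ Icc (0 : ℝ) 1) ⊆ C := by
  have hIcc : Icc (0 : ℝ) 1 = convexHull ℝ {0, 1} := by
    rw [convexHull_pair, segment_eq_Icc zero_le_one]
  rw [hIcc, ← convexHull_pi]
  exact convexHull_min (fun x hx ↦ h x fun i ↦ hx i (mem_univ i)) hC

theorem convex_vamosRegion : Convex ℝ vamosRegion := by
  simp only [vamosRegion, ofPred_and]
  repeat' apply Convex.inter
  all_goals first
    | exact convex_halfSpace_ge (LinearMap.proj _).isLinear _
    | exact convex_halfSpace_le (LinearMap.proj _).isLinear _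
    | exact convex_halfSpace_le ⟨fun x y ↦ by simp only [Pi.add_apply]; ring,
        fun c x ↦ by simp only [Pi.smul_apply, smul_eq_mul]; ring⟩ _

theorem vamosVertices_subset_vamosRegion : vamosVertices ⊆ vamosRegion := by
  simp only [vamosVertices, insert_subset_iff, singleton_subset_iff]
  norm_num [vamosRegion, cons_val_two, cons_val_three]

theorem pi_Icc_subset_convexHull_vamosVertices :
    univ.pi (fun _ ↦ Icc (0 : ℝ) 1) ⊆ convexHull ℝ vamosVertices := by
  have mem_of_midpoint (u v : Fin 4 → ℝ) {w : Fin 4 → ℝ} (hu : u ∈ vamosVertices)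
      (hv : v ∈ vamosVertices) (hw : midpoint ℝ u v = w) : w ∈ convexHull ℝ vamosVertices :=
    hw ▸ segment_subset_convexHull hu hv (midpoint_mem_segment u v)
  have h0100 : ![0, 1, 0, 0] ∈ convexHull ℝ vamosVertices := by
    apply mem_of_midpoint ![0, 2, 0, 0] ![0, 0, 0, 0] <;>
      norm_num [vamosVertices, midpoint_eq_smul_add]
  have h0101 : ![0, 1, 0, 1] ∈ convexHull ℝ vamosVertices := by
    apply mem_of_midpoint ![0, 2, 0, 1] ![0, 0, 0, 1] <;>
      norm_num [vamosVertices, midpoint_eq_smul_add]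
  have h0110 : ![0, 1, 1, 0] ∈ convexHull ℝ vamosVertices := by
    apply mem_of_midpoint ![0, 2, 0, 0] ![0, 0, 2, 0] <;>
      norm_num [vamosVertices, midpoint_eq_smul_add]
  have h0010 : ![0, 0, 1, 0] ∈ convexHull ℝ vamosVertices := by
    apply mem_of_midpoint ![0, 0, 2, 0] ![0, 0, 0, 0] <;>
      norm_num [vamosVertices, midpoint_eq_smul_add]
  have h1010 : ![1, 0, 1, 0] ∈ convexHull ℝ vamosVertices := by
    apply mem_of_midpoint ![1, 0, 2, 0] ![1, 0, 0, 0] <;>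
      norm_num [vamosVertices, midpoint_eq_smul_add]
  refine pi_Icc_subset_of_forall_corner_mem (convex_convexHull ℝ _) fun x hx ↦ ?_
  have hx_eq : x = ![x 0, x 1, x 2, x 3] := by ext i; fin_cases i <;> rfl
  rcases hx 0 with h0 | h0 <;> rcases hx 1 with h1 | h1 <;> rcases hx 2 with h2 | h2 <;>
    rcases hx 3 with h3 | h3 <;> rw [hx_eq, h0, h1, h2, h3] <;>
    first | assumption | exact subset_convexHull ℝ _ (by simp [vamosVertices])

theorem mem_convexHull_vamosVertices_of_one_lt_apply_one {r : Fin 4 → ℝ}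
    (hr : r ∈ vamosRegion) (hb1 : 1 < r 1) : r ∈ convexHull ℝ vamosVertices := by
  obtain ⟨ha0, -, hc0, hd0, -, hd1, hbc, hab, -⟩ := hr
  have hedge : ![0, 2, 0, r 3] ∈ convexHull ℝ vamosVertices := by
    refine segment_subset_convexHull (x := ![0, 2, 0, 0]) (y := ![0, 2, 0, 1])
      (by simp [vamosVertices]) (by simp [vamosVertices])
      ⟨1 - r 3, r 3, by linarith, hd0, by ring, ?_⟩
    ext i; fin_cases i <;> simp; ring
  have hface : ![r 0 / (2 - r 1), 1, r 2 / (2 - r 1), r 3] ∈ convexHull ℝ vamosVertices :=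
    pi_Icc_subset_convexHull_vamosVertices fun i _ ↦ by
      fin_cases i
      exacts [unitInterval.div_mem ha0 (by linarith) (by linarith), unitInterval.one_mem,
        unitInterval.div_mem hc0 (by linarith) (by linarith), ⟨hd0, hd1⟩]
  -- At `r 1 = 2` the face point has weight `0` and `r 0 = r 2 = 0`, so dividing by `0` is harmless.
  have ha : (2 - r 1) * (r 0 / (2 - r 1)) = r 0 := mul_div_cancel_of_imp' fun _ ↦ by linarith
  have hc : (2 - r 1) * (r 2 / (2 - r 1)) = r 2 := mul_div_cancel_of_imp' fun _ ↦ by linarith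
  convert convex_convexHull ℝ _ hedge hface (show 0 ≤ r 1 - 1 by linarith)
    (show 0 ≤ 2 - r 1 by linarith) (by ring) using 1
  ext i; fin_cases i <;> simp [ha, hc] <;> ring

theorem mem_convexHull_vamosVertices_of_one_lt_apply_two {r : Fin 4 → ℝ}
    (hr : r ∈ vamosRegion) (hc1 : 1 < r 2) : r ∈ convexHull ℝ vamosVertices := by
  obtain ⟨ha0, hb0, -, hd0, ha1, -, hbc, -, hcd⟩ := hr
  have hedge : ![r 0, 0, 2, 0] ∈ convexHull ℝ vamosVertices := by
    refine segment_subset_convexHull (x := ![0, 0, 2, 0]) (y := ![1, 0, 2, 0])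
      (by simp [vamosVertices]) (by simp [vamosVertices])
      ⟨1 - r 0, r 0, by linarith, ha0, by ring, ?_⟩
    ext i; fin_cases i <;> simp; ring
  have hface : ![r 0, r 1 / (2 - r 2), 1, r 3 / (2 - r 2)] ∈ convexHull ℝ vamosVertices :=
    pi_Icc_subset_convexHull_vamosVertices fun i _ ↦ by
      fin_cases i
      exacts [⟨ha0, ha1⟩, unitInterval.div_mem hb0 (by linarith) (by linarith),
        unitInterval.one_mem, unitInterval.div_mem hd0 (by linarith) (by linarith)]
  have hb : (2 - r 2) * (r 1 / (2 - r 2)) = r 1 := mul_div_cancel_of_imp' fun _ ↦ by linarith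
  have hd : (2 - r 2) * (r 3 / (2 - r 2)) = r 3 := mul_div_cancel_of_imp' fun _ ↦ by linarith
  convert convex_convexHull ℝ _ hedge hface (show 0 ≤ r 2 - 1 by linarith)
    (show 0 ≤ 2 - r 2 by linarith) (by ring) using 1
  ext i; fin_cases i <;> simp [hb, hd] <;> ring

theorem vamosRegion_subset_convexHull : vamosRegion ⊆ convexHull ℝ vamosVertices := by
  intro r hr
  rcases le_or_gt (r 1) 1 with hb1 | hb1
  · rcases le_or_gt (r 2) 1 with hc1 | hc1
    · obtain ⟨ha0, hb0, hc0, hd0, ha1, hd1, -⟩ := hr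
      exact pi_Icc_subset_convexHull_vamosVertices fun i _ ↦ by
        fin_cases i <;> exact ⟨‹_›, ‹_›⟩
    · exact mem_convexHull_vamosVertices_of_one_lt_apply_two hr hc1
  · exact mem_convexHull_vamosVertices_of_one_lt_apply_one hr hb1

theorem vamos_shannon_outer_bound_polytope :
    {r : Fin 4 → ℝ | 0 ≤ r 0 ∧ 0 ≤ r 1 ∧ 0 ≤ r 2 ∧ 0 ≤ r 3 ∧
      r 0 ≤ 1 ∧ r 3 ≤ 1 ∧ r 1 + r 2 ≤ 2 ∧ r 0 + r 1 ≤ 2 ∧ r 2 + r 3 ≤ 2} =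
    convexHull ℝ {![0,2,0,1], ![0,2,0,0], ![1,1,1,0], ![1,1,0,0],
      ![1,1,0,1], ![1,0,0,1], ![0,0,0,1], ![0,0,0,0],
      ![1,0,0,0], ![1,0,1,1], ![0,0,1,1], ![0,1,1,1],
      ![1,0,2,0], ![0,0,2,0], ![1,1,1,1]} :=
  Subset.antisymm vamosRegion_subset_convexHull
    (convexHull_min vamosVertices_subset_vamosRegion convex_vamosRegion)
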